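/- arXiv:1201.4779 — 6 statements merged into one kernel-verified Lean document; each statement's English description precedes it below -/
import Mathlib

section
/- If X solves the Sylvester equation A X + X B + Y = 0 and α, β are scalars such that A + βI and B + αI are invertible, then X satisfies the fixed-point identity X = (A − αI)(A + βI)^{-1} X (B − βI)(B + αI)^{-1} − (α + β)(A + βI)^{-1} Y (B + αI)^{-1}. -/
/-- If `X` solves the Sylvester equation `A X + X B + Y = 0` and `A + βI`, `B + αI` are
invertible, then `X` satisfies the ADI fixed-point identity. -/
theorem adi_fixed_point {n m : ℕ}
    (A : Matrix (Fin n) (Fin n) ℂ) (B : Matrix (Fin m) (Fin m) ℂ)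
    (Y X : Matrix (Fin n) (Fin m) ℂ) (α β : ℂ)
    (hA : IsUnit (A + β • (1 : Matrix (Fin n) (Fin n) ℂ)))
    (hB : IsUnit (B + α • (1 : Matrix (Fin m) (Fin m) ℂ)))
    (hX : A * X + X * B + Y = 0) :
    X = (A - α • 1) * (A + β • 1)⁻¹ * X * ((B - β • 1) * (B + α • 1)⁻¹)
        - (α + β) • ((A + β • 1)⁻¹ * Y * (B + α • 1)⁻¹) := by
  set P := A + β • (1 : Matrix (Fin n) (Fin n) ℂ) with hP
  set Q := B + α • (1 : Matrix (Fin m) (Fin m) ℂ) with hQ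
  have hPd := (Matrix.isUnit_iff_isUnit_det P).mp hA
  have hQd := (Matrix.isUnit_iff_isUnit_det Q).mp hB
  have hP1 : P⁻¹ * P = 1 := Matrix.nonsing_inv_mul P hPd
  have hP2 : P * P⁻¹ = 1 := Matrix.mul_nonsing_inv P hPd
  have hQ1 : Q⁻¹ * Q = 1 := Matrix.nonsing_inv_mul Q hQd
  have hQ2 : Q * Q⁻¹ = 1 := Matrix.mul_nonsing_inv Q hQd
  have hA1 : A - α • 1 = P - (α + β) • 1 := by rw [hP]; module
  have hB1 : B - β • 1 = Q - (α + β) • 1 := by rw [hQ]; module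
  have commA : (A - α • 1) * P⁻¹ = P⁻¹ * (A - α • 1) := by
    rw [hA1, Matrix.sub_mul, Matrix.mul_sub, hP1, hP2, Matrix.smul_mul,
      Matrix.mul_smul, Matrix.one_mul, Matrix.mul_one]
  have commB : Q⁻¹ * (B - β • 1) = (B - β • 1) * Q⁻¹ := by
    rw [hB1, Matrix.sub_mul, Matrix.mul_sub, hQ1, hQ2, Matrix.smul_mul,
      Matrix.mul_smul, Matrix.one_mul, Matrix.mul_one]
  have hY : Y = -(A * X) - X * B := by linear_combination (norm := noncomm_ring) hX
  have key : P * X * Q = (A - α • 1) * X * (B - β • 1) - (α + β) • Y := by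
    rw [hP, hQ, hY]
    simp only [Matrix.add_mul, Matrix.mul_add, Matrix.sub_mul, Matrix.mul_sub,
      Matrix.smul_mul, Matrix.mul_smul, Matrix.one_mul, Matrix.mul_one, smul_smul,
      smul_sub, smul_add, smul_neg, add_smul, mul_assoc]
    module
  have hmain : X = P⁻¹ * ((A - α • 1) * X * (B - β • 1) - (α + β) • Y) * Q⁻¹ := by
    rw [← key]
    simp only [Matrix.mul_assoc]
    rw [hQ2, Matrix.mul_one, ← Matrix.mul_assoc, hP1, Matrix.one_mul]
  refine hmain.trans ?_
  have commA' : ∀ Z : Matrix (Fin n) (Fin m) ℂ,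
      P⁻¹ * ((A - α • 1) * Z) = (A - α • 1) * (P⁻¹ * Z) := by
    intro Z
    rw [← Matrix.mul_assoc, ← commA, Matrix.mul_assoc]
  rw [Matrix.mul_sub, Matrix.sub_mul]
  congr 1
  · simp only [Matrix.mul_assoc, commA']
  · rw [Matrix.mul_smul, Matrix.smul_mul]
end

section
/- One step of the ADI iteration is a contraction toward the exact solution in the following sense: if X solves A X + X B + Y = 0 and X₁ = (A − αI)(A + βI)^{-1} X₀ (B − βI)(B + αI)^{-1} − (α + β)(A + βI)^{-1} Y (B + αI)^{-1}, then X − X₁ = (A − αI)(A + βI)^{-1} (X − X₀) (B − βI)(B + αI)^{-1}. -/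
/-- One ADI step is a contraction toward the exact solution: if `X` solves the Sylvester
equation and `X₁` is one ADI step from `X₀`, then
`X − X₁ = (A − αI)(A + βI)⁻¹ (X − X₀) (B − βI)(B + αI)⁻¹`. -/
theorem adi_one_step_error {n m : ℕ}
    (A : Matrix (Fin n) (Fin n) ℂ) (B : Matrix (Fin m) (Fin m) ℂ)
    (Y X X₀ X₁ : Matrix (Fin n) (Fin m) ℂ) (α β : ℂ)
    (hA : IsUnit (A + β • (1 : Matrix (Fin n) (Fin n) ℂ)))
    (hB : IsUnit (B + α • (1 : Matrix (Fin m) (Fin m) ℂ)))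
    (hX : A * X + X * B + Y = 0)
    (hX₁ : X₁ = (A - α • 1) * (A + β • 1)⁻¹ * X₀ * ((B - β • 1) * (B + α • 1)⁻¹)
        - (α + β) • ((A + β • 1)⁻¹ * Y * (B + α • 1)⁻¹)) :
    X - X₁ = (A - α • 1) * (A + β • 1)⁻¹ * (X - X₀) * ((B - β • 1) * (B + α • 1)⁻¹) := by
  have hdA := (Matrix.isUnit_iff_isUnit_det _).mp hA
  have hdB := (Matrix.isUnit_iff_isUnit_det _).mp hB
  have hP1 : (A + β • 1) * (A + β • 1)⁻¹ = 1 := Matrix.mul_nonsing_inv _ hdA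
  have hP2 : (A + β • 1)⁻¹ * (A + β • 1) = 1 := Matrix.nonsing_inv_mul _ hdA
  have hQ1 : (B + α • 1) * (B + α • 1)⁻¹ = 1 := Matrix.mul_nonsing_inv _ hdB
  have hAc : (A - α • 1) * (A + β • 1)⁻¹ = 1 - (α + β) • (A + β • 1)⁻¹ := by
    have h : (A - α • 1) = (A + β • 1) - (α + β) • (1 : Matrix (Fin n) (Fin n) ℂ) := by
      rw [add_smul]; abel
    rw [h, Matrix.sub_mul, hP1, Matrix.smul_mul, Matrix.one_mul]
  have hBc : (B - β • 1) * (B + α • 1)⁻¹ = 1 - (α + β) • (B + α • 1)⁻¹ := by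
    have h : (B - β • 1) = (B + α • 1) - (α + β) • (1 : Matrix (Fin m) (Fin m) ℂ) := by
      rw [add_smul]; abel
    rw [h, Matrix.sub_mul, hQ1, Matrix.smul_mul, Matrix.one_mul]
  have hPA : (A + β • 1)⁻¹ * A = 1 - β • (A + β • 1)⁻¹ := by
    have h := hP2
    rw [Matrix.mul_add, Matrix.mul_smul, Matrix.mul_one] at h
    exact eq_sub_of_add_eq h
  have hBQ : B * (B + α • 1)⁻¹ = 1 - α • (B + α • 1)⁻¹ := by
    have h := hQ1
    rw [Matrix.add_mul, Matrix.smul_mul, Matrix.one_mul] at h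
    exact eq_sub_of_add_eq h
  have hY : Y = -(A * X + X * B) := eq_neg_of_add_eq_zero_right hX
  have key : (A + β • 1)⁻¹ * Y * (B + α • 1)⁻¹
      = -((A + β • 1)⁻¹ * X + X * (B + α • 1)⁻¹
          - (α + β) • ((A + β • 1)⁻¹ * X * (B + α • 1)⁻¹)) := by
    have e : (A + β • 1)⁻¹ * Y * (B + α • 1)⁻¹
        = -(((A + β • 1)⁻¹ * A) * (X * (B + α • 1)⁻¹)
            + ((A + β • 1)⁻¹ * X) * (B * (B + α • 1)⁻¹)) := by
      rw [hY]
      simp only [Matrix.neg_mul, Matrix.mul_neg, Matrix.add_mul, Matrix.mul_add,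
        Matrix.mul_assoc]
    rw [e, hPA, hBQ]
    simp only [Matrix.mul_sub, Matrix.sub_mul, Matrix.mul_add, Matrix.add_mul, smul_sub, smul_add,
      smul_smul, Matrix.smul_mul, Matrix.mul_smul, Matrix.one_mul, Matrix.mul_one, Matrix.mul_neg,
      Matrix.neg_mul, smul_neg, neg_sub, neg_neg, Matrix.mul_assoc]
    module
  subst hX₁
  rw [hAc, hBc, key]
  simp only [Matrix.mul_sub, Matrix.sub_mul, Matrix.mul_add, Matrix.add_mul, smul_sub, smul_add,
    smul_smul, Matrix.smul_mul, Matrix.mul_smul, Matrix.one_mul, Matrix.mul_one, Matrix.mul_neg,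
    Matrix.neg_mul, smul_neg, neg_sub, neg_neg, Matrix.mul_assoc]
  module
end

section
/- Moment-matching property of Galerkin projection: let Q ∈ ℂ^{n×r} have orthonormal columns (Q*Q = I_r) and let σ ∈ ℂ be such that σI − A is invertible and (σI − A)^{-1} b lies in the column space of Q. If σI_r − Q*AQ is invertible, then Q (σI_r − Q*AQ)^{-1} Q* b = (σI − A)^{-1} b. -/
open Matrix in
/-- Moment matching of Galerkin projection: if `Q` has orthonormal columns, `σI − A` is
invertible, `(σI − A)⁻¹ b ∈ colspan Q`, and `σI_r − Q*AQ` is invertible, then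
`Q (σI_r − Q*AQ)⁻¹ Q* b = (σI − A)⁻¹ b`. -/
theorem galerkin_moment_matching {n r : ℕ}
    (A : Matrix (Fin n) (Fin n) ℂ) (b : Fin n → ℂ)
    (Q : Matrix (Fin n) (Fin r) ℂ) (hQ : Qᴴ * Q = 1) (σ : ℂ)
    (h1 : IsUnit (σ • (1 : Matrix (Fin n) (Fin n) ℂ) - A))
    (h2 : ∃ y : Fin r → ℂ, Q *ᵥ y = (σ • (1 : Matrix (Fin n) (Fin n) ℂ) - A)⁻¹ *ᵥ b)
    (h3 : IsUnit (σ • (1 : Matrix (Fin r) (Fin r) ℂ) - Qᴴ * A * Q)) :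
    Q *ᵥ ((σ • (1 : Matrix (Fin r) (Fin r) ℂ) - Qᴴ * A * Q)⁻¹ *ᵥ (Qᴴ *ᵥ b)) =
      (σ • (1 : Matrix (Fin n) (Fin n) ℂ) - A)⁻¹ *ᵥ b := by
  obtain ⟨y, hy⟩ := h2
  set M := σ • (1 : Matrix (Fin n) (Fin n) ℂ) - A with hM
  set Mr := σ • (1 : Matrix (Fin r) (Fin r) ℂ) - Qᴴ * A * Q with hMr
  have hMmul : M *ᵥ (Q *ᵥ y) = b := by
    rw [hy, Matrix.mulVec_mulVec, Matrix.mul_nonsing_inv _ ((Matrix.isUnit_iff_isUnit_det M).mp h1), Matrix.one_mulVec]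
  have key : Mr *ᵥ y = Qᴴ *ᵥ b := by
    have : Qᴴ *ᵥ (M *ᵥ (Q *ᵥ y)) = Qᴴ *ᵥ b := by rw [hMmul]
    rw [Matrix.mulVec_mulVec, Matrix.mulVec_mulVec, ← Matrix.mulVec_mulVec] at this
    have hQM : Qᴴ * M * Q = Mr := by
      rw [hM, hMr]
      simp [Matrix.mul_sub, Matrix.sub_mul, Matrix.mul_smul, Matrix.smul_mul, hQ, Matrix.mul_assoc]
    rw [Matrix.mulVec_mulVec] at this
    rw [hQM] at this
    exact this
  have hyval : y = Mr⁻¹ *ᵥ (Qᴴ *ᵥ b) := by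
    rw [← key, Matrix.mulVec_mulVec,
      Matrix.nonsing_inv_mul _ ((Matrix.isUnit_iff_isUnit_det Mr).mp h3), Matrix.one_mulVec]
  rw [← hyval, hy]
end

section
/- Transfer function interpolation: under the Galerkin projection with orthonormal Q whose column space contains (σI − A)^{-1} b, the reduced transfer function matches the full one at σ: c* Q (σI_r − Q*AQ)^{-1} Q* b = c* (σI − A)^{-1} b for every c ∈ ℂ^n. -/
open Matrix in
/-- Transfer function interpolation: under Galerkin projection with orthonormal `Q` whose
column space contains `(σI − A)⁻¹ b`, the reduced transfer function matches the full one at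
`σ`: `c* Q (σI_r − Q*AQ)⁻¹ Q* b = c* (σI − A)⁻¹ b` for every `c`. -/
theorem galerkin_transfer_function_interpolation {n r : ℕ}
    (A : Matrix (Fin n) (Fin n) ℂ) (b : Fin n → ℂ)
    (Q : Matrix (Fin n) (Fin r) ℂ) (hQ : Qᴴ * Q = 1) (σ : ℂ)
    (h1 : IsUnit (σ • (1 : Matrix (Fin n) (Fin n) ℂ) - A))
    (h2 : ∃ y : Fin r → ℂ, Q *ᵥ y = (σ • (1 : Matrix (Fin n) (Fin n) ℂ) - A)⁻¹ *ᵥ b)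
    (h3 : IsUnit (σ • (1 : Matrix (Fin r) (Fin r) ℂ) - Qᴴ * A * Q)) :
    ∀ c : Fin n → ℂ,
      star c ⬝ᵥ (Q *ᵥ ((σ • (1 : Matrix (Fin r) (Fin r) ℂ) - Qᴴ * A * Q)⁻¹ *ᵥ (Qᴴ *ᵥ b))) =
        star c ⬝ᵥ ((σ • (1 : Matrix (Fin n) (Fin n) ℂ) - A)⁻¹ *ᵥ b) := by
  intro c
  obtain ⟨y, hy⟩ := h2
  set M : Matrix (Fin n) (Fin n) ℂ := σ • 1 - A with hM
  set Mr : Matrix (Fin r) (Fin r) ℂ := σ • 1 - Qᴴ * A * Q with hMr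
  have hMdet : IsUnit M.det := (Matrix.isUnit_iff_isUnit_det M).mp h1
  have hMrdet : IsUnit Mr.det := (Matrix.isUnit_iff_isUnit_det Mr).mp h3
  have hb : M *ᵥ (Q *ᵥ y) = b := by
    rw [hy, Matrix.mulVec_mulVec, Matrix.mul_nonsing_inv M hMdet, Matrix.one_mulVec]
  have hproj : Qᴴ * M * Q = Mr := by
    simp [hM, hMr, Matrix.mul_sub, Matrix.sub_mul, Matrix.mul_smul, Matrix.smul_mul, hQ,
      Matrix.mul_assoc]
  have hQb : Mr *ᵥ y = Qᴴ *ᵥ b := by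
    rw [← hb, ← hproj, ← Matrix.mulVec_mulVec, ← Matrix.mulVec_mulVec]
  have hyy : (Mr⁻¹) *ᵥ (Qᴴ *ᵥ b) = y := by
    rw [← hQb, Matrix.mulVec_mulVec, Matrix.nonsing_inv_mul Mr hMrdet, Matrix.one_mulVec]
  rw [hyy, hy]
end

section
/- If Q ∈ ℂ^{n×r} has orthonormal columns and for each i = 1,…,r the vector (σᵢI − A)^{-1} b lies in the column space of Q, with all σᵢI − A and σᵢI_r − Q*AQ invertible, then for every x ∈ ℂ^r we have Q·v_r = v, where v = Σᵢ xᵢ (σᵢI − A)^{-1} b and v_r = Σᵢ xᵢ (σᵢI_r − Q*AQ)^{-1} Q*b; equivalently, any element of the rational Krylov subspace K = span{(σ₁I − A)^{-1}b, …, (σ_rI − A)^{-1}b} equals Q times the corresponding element of the projected rational Krylov subspace. -/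
open Matrix in
/-- Any element of the rational Krylov subspace equals `Q` times the corresponding element of
the projected rational Krylov subspace: for all coefficients `x`,
`Q ⬝ (Σᵢ xᵢ (σᵢI_r − Q*AQ)⁻¹ Q*b) = Σᵢ xᵢ (σᵢI − A)⁻¹ b`. -/
theorem galerkin_krylov_lift {n r : ℕ}
    (A : Matrix (Fin n) (Fin n) ℂ) (b : Fin n → ℂ)
    (Q : Matrix (Fin n) (Fin r) ℂ) (hQ : Qᴴ * Q = 1) (σ : Fin r → ℂ)
    (h1 : ∀ i : Fin r, IsUnit (σ i • (1 : Matrix (Fin n) (Fin n) ℂ) - A))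
    (h2 : ∀ i : Fin r, ∃ y : Fin r → ℂ,
        Q *ᵥ y = (σ i • (1 : Matrix (Fin n) (Fin n) ℂ) - A)⁻¹ *ᵥ b)
    (h3 : ∀ i : Fin r, IsUnit (σ i • (1 : Matrix (Fin r) (Fin r) ℂ) - Qᴴ * A * Q)) :
    ∀ x : Fin r → ℂ,
      Q *ᵥ (∑ i : Fin r, x i •
          ((σ i • (1 : Matrix (Fin r) (Fin r) ℂ) - Qᴴ * A * Q)⁻¹ *ᵥ (Qᴴ *ᵥ b))) =
        ∑ i : Fin r, x i • ((σ i • (1 : Matrix (Fin n) (Fin n) ℂ) - A)⁻¹ *ᵥ b) := by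
  have key : ∀ i : Fin r,
      Q *ᵥ ((σ i • (1 : Matrix (Fin r) (Fin r) ℂ) - Qᴴ * A * Q)⁻¹ *ᵥ (Qᴴ *ᵥ b)) =
        (σ i • (1 : Matrix (Fin n) (Fin n) ℂ) - A)⁻¹ *ᵥ b := by
    intro i
    obtain ⟨y, hy⟩ := h2 i
    have hb : (σ i • (1 : Matrix (Fin n) (Fin n) ℂ) - A) *ᵥ (Q *ᵥ y) = b := by
      rw [hy, Matrix.mulVec_mulVec, Matrix.mul_nonsing_inv _
        ((Matrix.isUnit_iff_isUnit_det _).mp (h1 i)), Matrix.one_mulVec]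
    have hQb : Qᴴ *ᵥ b = (σ i • (1 : Matrix (Fin r) (Fin r) ℂ) - Qᴴ * A * Q) *ᵥ y := by
      have hM : Qᴴ * (σ i • (1 : Matrix (Fin n) (Fin n) ℂ) - A) * Q =
          σ i • (1 : Matrix (Fin r) (Fin r) ℂ) - Qᴴ * A * Q := by
        rw [Matrix.mul_sub, Matrix.sub_mul, Matrix.mul_smul, Matrix.smul_mul,
          Matrix.mul_one, hQ, Matrix.mul_assoc]
      rw [← hb, Matrix.mulVec_mulVec, Matrix.mulVec_mulVec, hM]
    have hid : (σ i • (1 : Matrix (Fin r) (Fin r) ℂ) - Qᴴ * A * Q)⁻¹ *ᵥ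
        ((σ i • (1 : Matrix (Fin r) (Fin r) ℂ) - Qᴴ * A * Q) *ᵥ y) = y := by
      rw [Matrix.mulVec_mulVec, Matrix.nonsing_inv_mul _
        ((Matrix.isUnit_iff_isUnit_det _).mp (h3 i)), Matrix.one_mulVec]
    rw [hQb, hid, hy]
  intro x
  have hs := map_sum Q.mulVecLin
    (fun i => x i • ((σ i • (1 : Matrix (Fin r) (Fin r) ℂ) - Qᴴ * A * Q)⁻¹ *ᵥ (Qᴴ *ᵥ b)))
    Finset.univ
  simp only [Matrix.mulVecLin_apply] at hs
  rw [hs]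
  exact Finset.sum_congr rfl fun i _ => by rw [Matrix.mulVec_smul, key i]
end

section
/- Suppose Q ∈ ℂ^{n×r} has orthonormal columns spanning the rational Krylov subspace K = span{(σ₁I − A)^{-1}b,…,(σ_rI − A)^{-1}b}, X̃ solves the projected Lyapunov equation (Q*AQ)X̃ + X̃(Q*AQ)* + (Q*b)(Q*b)* = 0, X_r = Q X̃ Q*, and R = A X_r + X_r A* + b b*. If Q*R = 0, then, writing the eigendecomposition Q*AQ = T Λ T^{-1} with eigenvalues λ₁,…,λ_r, each i-th column of Q X̃ T^{-*} equals (−λ̄ᵢ I − A)^{-1} b ζᵢ, where ζᵢ is the i-th entry of b* Q T^{-*}; consequently, assuming all ζᵢ ≠ 0 and the λᵢ distinct, the set {−λ̄₁,…,−λ̄_r} generates the same rational Krylov subspace K, i.e. span{(−λ̄ᵢI − A)^{-1}b : i = 1,…,r} = K. -/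
open Matrix Finset

private lemma aux_hne {r : ℕ} {lam d : Fin r → ℂ} (hd : ∀ i, d i ≠ 0)
    {Y : Matrix (Fin r) (Fin r) ℂ}
    (heq : ∀ i j, (lam i + (starRingEnd ℂ) (lam j)) * Y i j
      + d i * (starRingEnd ℂ) (d j) = 0) :
    ∀ i j, lam i + (starRingEnd ℂ) (lam j) ≠ 0 := by
  intro i j h
  have h2 := heq i j
  rw [h, zero_mul, zero_add] at h2
  rcases mul_eq_zero.mp h2 with h3 | h3
  · exact hd i h3
  · exact hd j (by simpa using h3)

private lemma aux_val {r : ℕ} {lam d : Fin r → ℂ} (hd : ∀ i, d i ≠ 0)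
    {Y : Matrix (Fin r) (Fin r) ℂ}
    (heq : ∀ i j, (lam i + (starRingEnd ℂ) (lam j)) * Y i j
      + d i * (starRingEnd ℂ) (d j) = 0) :
    ∀ i j, Y i j = -(d i * (starRingEnd ℂ) (d j)) / (lam i + (starRingEnd ℂ) (lam j)) := by
  intro i j
  rw [eq_div_iff (aux_hne hd heq i j)]
  linear_combination heq i j

private lemma aux_herm {r : ℕ} {lam d : Fin r → ℂ} (hd : ∀ i, d i ≠ 0)
    {Y : Matrix (Fin r) (Fin r) ℂ}
    (heq : ∀ i j, (lam i + (starRingEnd ℂ) (lam j)) * Y i j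
      + d i * (starRingEnd ℂ) (d j) = 0) :
    ∀ i j, (starRingEnd ℂ) (Y i j) = Y j i := by
  intro i j
  rw [aux_val hd heq i j, aux_val hd heq j i]
  rw [map_div₀, map_neg, _root_.map_mul, map_add]
  simp only [Complex.conj_conj]
  ring

private lemma aux_ker {r : ℕ} {lam d : Fin r → ℂ} (hlaminj : Function.Injective lam)
    (hd : ∀ i, d i ≠ 0) {Y : Matrix (Fin r) (Fin r) ℂ}
    (heq : ∀ i j, (lam i + (starRingEnd ℂ) (lam j)) * Y i j
      + d i * (starRingEnd ℂ) (d j) = 0) :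
    ∀ v : Fin r → ℂ, Y *ᵥ v = 0 → v = 0 := by
  have hherm := aux_herm hd heq
  suffices h : ∀ m (v : Fin r → ℂ),
      (univ.filter fun j => v j ≠ 0).card ≤ m → Y *ᵥ v = 0 → v = 0 by
    intro v hv
    exact h _ v le_rfl hv
  intro m
  induction m with
  | zero =>
    intro v hc hv
    funext k
    simp only [Pi.zero_apply]
    by_contra hk
    have hmem : k ∈ univ.filter (fun j => v j ≠ 0) := by simp [hk]
    have := card_pos.mpr ⟨k, hmem⟩
    omega
  | succ m ih =>
    intro v hc hv
    have hYv : ∀ i, ∑ j, Y i j * v j = 0 := by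
      intro i
      have := congrFun hv i
      simpa [mulVec, dotProduct] using this
    have hYv' : ∀ j, ∑ i, (starRingEnd ℂ) (v i) * Y i j = 0 := by
      intro j
      have : ∑ i, (starRingEnd ℂ) (v i) * Y i j
          = (starRingEnd ℂ) (∑ i, Y j i * v i) := by
        rw [map_sum]
        refine Finset.sum_congr rfl fun i _ => ?_
        rw [_root_.map_mul, hherm j i]
        ring
      rw [this, hYv j, map_zero]
    set c : ℂ := ∑ j, (starRingEnd ℂ) (d j) * v j with hcdef
    have hc0 : c = 0 := by
      have e2 : ∑ i, ∑ j, (starRingEnd ℂ) (v i) * ((lam i + (starRingEnd ℂ) (lam j)) * Y i j) * v j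
          = -((∑ i, (starRingEnd ℂ) (v i) * d i) * c) := by
        rw [hcdef, Finset.sum_mul_sum, ← Finset.sum_neg_distrib]
        refine Finset.sum_congr rfl fun i _ => ?_
        rw [← Finset.sum_neg_distrib]
        refine Finset.sum_congr rfl fun j _ => ?_
        linear_combination ((starRingEnd ℂ) (v i) * v j) * heq i j
      have e3 : ∑ i, ∑ j, (starRingEnd ℂ) (v i) * ((lam i + (starRingEnd ℂ) (lam j)) * Y i j) * v j
          = 0 := by
        have esplit : ∀ i j, (starRingEnd ℂ) (v i) * ((lam i + (starRingEnd ℂ) (lam j)) * Y i j) * v j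
            = ((starRingEnd ℂ) (v i) * lam i) * (Y i j * v j)
              + ((starRingEnd ℂ) (lam j) * v j) * ((starRingEnd ℂ) (v i) * Y i j) := by
          intro i j; ring
        simp only [esplit, Finset.sum_add_distrib]
        rw [Finset.sum_comm (s := univ) (t := univ)
          (f := fun i j => ((starRingEnd ℂ) (lam j) * v j) * ((starRingEnd ℂ) (v i) * Y i j))]
        simp only [← Finset.mul_sum, hYv, hYv', mul_zero, Finset.sum_const_zero, add_zero]
      rw [e3] at e2
      have := e2.symm
      rw [neg_eq_zero, mul_eq_zero] at this
      rcases this with h | h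
      · have hconj : ∑ i, (starRingEnd ℂ) (v i) * d i = (starRingEnd ℂ) c := by
          rw [hcdef, map_sum]
          refine Finset.sum_congr rfl fun i _ => ?_
          rw [_root_.map_mul, Complex.conj_conj]
          ring
        rw [hconj] at h
        simpa using h
      · exact h
    by_cases hv0 : v = 0
    · exact hv0
    obtain ⟨j0, hj0⟩ : ∃ j0, v j0 ≠ 0 := by
      by_contra h
      push_neg at h
      exact hv0 (funext h)
    set w : Fin r → ℂ := fun k => ((starRingEnd ℂ) (lam k) - (starRingEnd ℂ) (lam j0)) * v k
      with hwdef
    have hYw : Y *ᵥ w = 0 := by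
      funext i
      have key : ∀ j, Y i j * w j
          = -(d i * ((starRingEnd ℂ) (d j) * v j)) - lam i * (Y i j * v j)
            - (starRingEnd ℂ) (lam j0) * (Y i j * v j) := by
        intro j
        simp only [hwdef]
        linear_combination v j * heq i j
      have : (Y *ᵥ w) i = ∑ j, Y i j * w j := by simp [mulVec, dotProduct]
      rw [Pi.zero_apply, this]
      calc ∑ j, Y i j * w j
          = ∑ j, (-(d i * ((starRingEnd ℂ) (d j) * v j)) - lam i * (Y i j * v j)
              - (starRingEnd ℂ) (lam j0) * (Y i j * v j)) :=
            Finset.sum_congr rfl fun j _ => key j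
        _ = -(d i * ∑ j, (starRingEnd ℂ) (d j) * v j) - lam i * (∑ j, Y i j * v j)
              - (starRingEnd ℂ) (lam j0) * (∑ j, Y i j * v j) := by
            simp only [Finset.sum_sub_distrib, Finset.mul_sum, Finset.sum_neg_distrib]
        _ = 0 := by rw [hYv i, ← hcdef, hc0]; ring
    have hsub : (univ.filter fun k => w k ≠ 0) ⊆ (univ.filter fun k => v k ≠ 0).erase j0 := by
      intro k hk
      simp only [mem_filter, mem_univ, true_and, hwdef] at hk
      rw [mem_erase, mem_filter]
      refine ⟨fun hkj => ?_, mem_univ k, fun hvk => hk (by rw [hvk, mul_zero])⟩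
      rw [hkj, sub_self, zero_mul] at hk
      exact hk rfl
    have hcard : (univ.filter fun k => w k ≠ 0).card ≤ m := by
      have h1 := Finset.card_le_card hsub
      have h2 : ((univ.filter fun k => v k ≠ 0).erase j0).card
          = (univ.filter fun k => v k ≠ 0).card - 1 :=
        Finset.card_erase_of_mem (by simp [hj0])
      omega
    have hw0 := ih w hcard hYw
    have hvk : ∀ k, k ≠ j0 → v k = 0 := by
      intro k hk
      have := congrFun hw0 k
      simp only [hwdef, Pi.zero_apply] at this
      rcases mul_eq_zero.mp this with h | h
      · exact absurd (hlaminj ((starRingEnd ℂ).injective (sub_eq_zero.mp h))) hk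
      · exact h
    have hcj : (starRingEnd ℂ) (d j0) * v j0 = 0 := by
      rw [← hc0, hcdef]
      rw [Finset.sum_eq_single j0 (fun k _ hk => by rw [hvk k hk, mul_zero])
        (fun h => absurd (mem_univ j0) h)]
    exfalso
    rcases mul_eq_zero.mp hcj with h | h
    · exact hd j0 (by simpa using h)
    · exact hj0 h

private lemma aux_mul_vecMulVec {m n p : ℕ} (M : Matrix (Fin m) (Fin n) ℂ)
    (u : Fin n → ℂ) (v : Fin p → ℂ) :
    M * vecMulVec u v = vecMulVec (M *ᵥ u) v := by
  ext i j
  simp [mul_apply, vecMulVec_apply, mulVec, dotProduct, Finset.sum_mul, mul_assoc]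

private lemma aux_vecMulVec_mul {m n p : ℕ} (u : Fin m → ℂ) (v : Fin n → ℂ)
    (M : Matrix (Fin n) (Fin p) ℂ) :
    vecMulVec u v * M = vecMulVec u (v ᵥ* M) := by
  ext i j
  simp [mul_apply, vecMulVec_apply, vecMul, dotProduct, Finset.mul_sum, mul_assoc]

private lemma aux_mulVec_eq_sum {m n : ℕ} (M : Matrix (Fin m) (Fin n) ℂ) (z : Fin n → ℂ) :
    M *ᵥ z = ∑ i, z i • (fun k => M k i) := by
  funext k
  simp [mulVec, dotProduct, Finset.sum_apply, mul_comm]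

private lemma aux_col_mul {m n p : ℕ} (M : Matrix (Fin m) (Fin n) ℂ)
    (N : Matrix (Fin n) (Fin p) ℂ) (i : Fin p) :
    (fun k => (M * N) k i) = M *ᵥ (fun l => N l i) := by
  funext k
  simp [mul_apply, mulVec, dotProduct]

open Matrix in
/-- If the residual of the Galerkin (rational Krylov) approximation of the Lyapunov equation
satisfies `Q*R = 0`, then, writing the eigendecomposition `Q*AQ = T Λ T⁻¹`, each column of
`Q Xt T⁻ᴴ` equals `(−λ̄ᵢ I − A)⁻¹ b ζᵢ` where `ζᵢ` is the `i`-th entry of `b* Q T⁻ᴴ`;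
consequently (all `ζᵢ ≠ 0`, `λᵢ` distinct) `span{(−λ̄ᵢI − A)⁻¹b} = K`. -/
theorem lyapunov_residual_orthogonal_implies_mirrored_shifts {n r : ℕ}
    (A : Matrix (Fin n) (Fin n) ℂ) (b : Fin n → ℂ) (σ : Fin r → ℂ)
    (hσinj : Function.Injective σ)
    (hσ : ∀ i : Fin r, IsUnit (σ i • (1 : Matrix (Fin n) (Fin n) ℂ) - A))
    (Q : Matrix (Fin n) (Fin r) ℂ) (hQ : Qᴴ * Q = 1)
    (hK : LinearMap.range Q.mulVecLin =
      Submodule.span ℂ (Set.range fun i : Fin r =>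
        (σ i • (1 : Matrix (Fin n) (Fin n) ℂ) - A)⁻¹ *ᵥ b))
    (Xt : Matrix (Fin r) (Fin r) ℂ)
    (hXt : (Qᴴ * A * Q) * Xt + Xt * (Qᴴ * A * Q)ᴴ
        + Matrix.vecMulVec (Qᴴ *ᵥ b) (star (Qᴴ *ᵥ b)) = 0)
    (R : Matrix (Fin n) (Fin n) ℂ)
    (hR : R = A * (Q * Xt * Qᴴ) + (Q * Xt * Qᴴ) * Aᴴ + Matrix.vecMulVec b (star b))
    (hRorth : Qᴴ * R = 0)
    (T : Matrix (Fin r) (Fin r) ℂ) (hT : IsUnit T) (lam : Fin r → ℂ)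
    (hdecomp : Qᴴ * A * Q = T * Matrix.diagonal lam * T⁻¹)
    (hlamA : ∀ i : Fin r,
      IsUnit ((-(starRingEnd ℂ (lam i))) • (1 : Matrix (Fin n) (Fin n) ℂ) - A))
    (ζ : Fin r → ℂ) (hζdef : ∀ i : Fin r, ζ i = Matrix.vecMul (star b) (Q * (T⁻¹)ᴴ) i)
    (hζ : ∀ i : Fin r, ζ i ≠ 0) (hlaminj : Function.Injective lam) :
    (∀ i : Fin r, (fun k => (Q * Xt * (T⁻¹)ᴴ) k i) =
      ζ i • (((-(starRingEnd ℂ (lam i))) • (1 : Matrix (Fin n) (Fin n) ℂ) - A)⁻¹ *ᵥ b)) ∧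
    Submodule.span ℂ (Set.range fun i : Fin r =>
        ((-(starRingEnd ℂ (lam i))) • (1 : Matrix (Fin n) (Fin n) ℂ) - A)⁻¹ *ᵥ b) =
      Submodule.span ℂ (Set.range fun i : Fin r =>
        (σ i • (1 : Matrix (Fin n) (Fin n) ℂ) - A)⁻¹ *ᵥ b) := by
  have hTd : IsUnit T.det := (Matrix.isUnit_iff_isUnit_det T).mp hT
  have hTi : T * T⁻¹ = 1 := Matrix.mul_nonsing_inv T hTd
  have hiT : T⁻¹ * T = 1 := Matrix.nonsing_inv_mul T hTd
  have hTH : Tᴴ * (T⁻¹)ᴴ = 1 := by rw [← conjTranspose_mul, hiT, conjTranspose_one]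
  have hHT : (T⁻¹)ᴴ * Tᴴ = 1 := by rw [← conjTranspose_mul, hTi, conjTranspose_one]
  set c : Fin r → ℂ := Qᴴ *ᵥ b with hcdef
  set d : Fin r → ℂ := T⁻¹ *ᵥ c with hddef
  set Y : Matrix (Fin r) (Fin r) ℂ := T⁻¹ * Xt * (T⁻¹)ᴴ with hYdef
  have h0 : T⁻¹ * ((T * Matrix.diagonal lam * T⁻¹) * Xt
      + Xt * (T * Matrix.diagonal lam * T⁻¹)ᴴ + Matrix.vecMulVec c (star c)) * (T⁻¹)ᴴ = 0 := by
    rw [← hdecomp, hXt, Matrix.mul_zero, Matrix.zero_mul]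
  have htrans : Matrix.diagonal lam * Y + Y * Matrix.diagonal (star lam)
      + Matrix.vecMulVec d (star d) = 0 := by
    rw [← h0]
    simp only [Matrix.mul_add, Matrix.add_mul, conjTranspose_mul, diagonal_conjTranspose,
      ← Matrix.mul_assoc]
    rw [hiT, Matrix.one_mul, Matrix.mul_assoc _ Tᴴ (T⁻¹)ᴴ, hTH, Matrix.mul_one,
      aux_mul_vecMulVec, aux_vecMulVec_mul, ← Matrix.star_mulVec, ← hddef]
    simp only [hYdef, Matrix.mul_assoc]
  -- entrywise equation
  have heq : ∀ i j, (lam i + (starRingEnd ℂ) (lam j)) * Y i j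
      + d i * (starRingEnd ℂ) (d j) = 0 := by
    intro i j
    have := congrFun (congrFun htrans i) j
    simp only [Matrix.add_apply, Matrix.diagonal_mul, Matrix.mul_diagonal,
      vecMulVec_apply, Pi.star_apply, Matrix.zero_apply, RCLike.star_def] at this
    linear_combination this
  -- star d = ζ
  have hstard : star d = ζ := by
    funext i
    rw [hζdef i, hddef, hcdef, Matrix.mulVec_mulVec, Matrix.star_mulVec,
      conjTranspose_mul, conjTranspose_conjTranspose]
  have hdz : ∀ i, d i ≠ 0 := by
    intro i h
    apply hζ i
    rw [← hstard]
    simp [h]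
  -- Y and Xt are Hermitian
  have hYH : Yᴴ = Y := by
    ext i j
    rw [conjTranspose_apply, RCLike.star_def]
    exact aux_herm hdz heq j i
  have hXtY : Xt = T * Y * Tᴴ := by
    rw [hYdef]
    calc Xt = (T * T⁻¹) * Xt * ((T⁻¹)ᴴ * Tᴴ) := by rw [hTi, hHT, Matrix.one_mul, Matrix.mul_one]
      _ = T * (T⁻¹ * Xt * (T⁻¹)ᴴ) * Tᴴ := by simp only [Matrix.mul_assoc]
  have hXtH : Xtᴴ = Xt := by
    rw [hXtY]
    calc (T * Y * Tᴴ)ᴴ = T * Yᴴ * Tᴴ := by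
          simp only [conjTranspose_mul, conjTranspose_conjTranspose, Matrix.mul_assoc]
      _ = T * Y * Tᴴ := by rw [hYH]
  -- R is Hermitian, hence R * Q = 0
  have hbbH : (Matrix.vecMulVec b (star b))ᴴ = Matrix.vecMulVec b (star b) := by
    ext i j
    simp [vecMulVec_apply, conjTranspose_apply, mul_comm]
  have hRH : Rᴴ = R := by
    rw [hR]
    simp only [conjTranspose_add, conjTranspose_mul, conjTranspose_conjTranspose, hbbH,
      hXtH, ← Matrix.mul_assoc]
    abel
  have hRQ : R * Q = 0 := by
    have := congrArg conjTranspose hRorth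
    rw [conjTranspose_mul, conjTranspose_conjTranspose, hRH, conjTranspose_zero] at this
    exact this
  -- the key matrix identity
  have hQAQH : Qᴴ * Aᴴ * Q = (T⁻¹)ᴴ * Matrix.diagonal (star lam) * Tᴴ := by
    have := congrArg conjTranspose hdecomp
    simpa only [conjTranspose_mul, conjTranspose_conjTranspose, diagonal_conjTranspose,
      Matrix.mul_assoc] using this
  have hbig : A * (Q * Xt * (T⁻¹)ᴴ) + (Q * Xt * (T⁻¹)ᴴ) * Matrix.diagonal (star lam)
      + Matrix.vecMulVec b ζ = 0 := by
    have h1 : R * (Q * (T⁻¹)ᴴ) = 0 := by rw [← Matrix.mul_assoc, hRQ, Matrix.zero_mul]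
    rw [hR] at h1
    rw [← h1]
    simp only [Matrix.add_mul, ← Matrix.mul_assoc]
    have e1 : A * Q * Xt * Qᴴ * Q = A * Q * Xt := by
      rw [Matrix.mul_assoc _ Qᴴ Q, hQ, Matrix.mul_one]
    have e2 : Q * Xt * Qᴴ * Aᴴ * Q * (T⁻¹)ᴴ
        = Q * Xt * (T⁻¹)ᴴ * Matrix.diagonal (star lam) := by
      calc Q * Xt * Qᴴ * Aᴴ * Q * (T⁻¹)ᴴ
          = Q * Xt * (Qᴴ * Aᴴ * Q) * (T⁻¹)ᴴ := by simp only [Matrix.mul_assoc]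
        _ = Q * Xt * ((T⁻¹)ᴴ * Matrix.diagonal (star lam) * Tᴴ) * (T⁻¹)ᴴ := by rw [hQAQH]
        _ = Q * Xt * (T⁻¹)ᴴ * Matrix.diagonal (star lam) * (Tᴴ * (T⁻¹)ᴴ) := by
            simp only [Matrix.mul_assoc]
        _ = Q * Xt * (T⁻¹)ᴴ * Matrix.diagonal (star lam) := by rw [hTH, Matrix.mul_one]
    have e3 : Matrix.vecMulVec b (star b) * Q * (T⁻¹)ᴴ = Matrix.vecMulVec b ζ := by
      rw [Matrix.mul_assoc, aux_vecMulVec_mul, ← hstard, hddef, hcdef,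
        Matrix.mulVec_mulVec, Matrix.star_mulVec, conjTranspose_mul,
        conjTranspose_conjTranspose]
    rw [e1, e2, e3]
  -- first conclusion
  have goal1 : ∀ i : Fin r, (fun k => (Q * Xt * (T⁻¹)ᴴ) k i) =
      ζ i • (((-(starRingEnd ℂ (lam i))) • (1 : Matrix (Fin n) (Fin n) ℂ) - A)⁻¹ *ᵥ b) := by
    intro i
    set M := (-(starRingEnd ℂ (lam i))) • (1 : Matrix (Fin n) (Fin n) ℂ) - A with hM
    have hMd : IsUnit M.det := (Matrix.isUnit_iff_isUnit_det M).mp (hlamA i)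
    have hcol : M *ᵥ (fun k => (Q * Xt * (T⁻¹)ᴴ) k i) = ζ i • b := by
      funext k
      have hb := congrFun (congrFun hbig k) i
      simp only [Matrix.add_apply, Matrix.mul_diagonal, vecMulVec_apply, Pi.star_apply,
        Matrix.zero_apply, RCLike.star_def] at hb
      simp only [hM, mulVec, dotProduct, Matrix.sub_apply, Matrix.smul_apply,
        Matrix.one_apply, smul_eq_mul, Pi.smul_apply, sub_mul, Finset.sum_sub_distrib,
        mul_ite, mul_one, mul_zero, ite_mul, zero_mul, Finset.sum_ite_eq,
        Finset.mem_univ, if_true]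
      have hAP : ∑ l, A k l * (Q * Xt * (T⁻¹)ᴴ) l i = (A * (Q * Xt * (T⁻¹)ᴴ)) k i := by
        simp [mul_apply]
      rw [hAP]
      linear_combination -hb
    have : (fun k => (Q * Xt * (T⁻¹)ᴴ) k i)
        = M⁻¹ *ᵥ (M *ᵥ (fun k => (Q * Xt * (T⁻¹)ᴴ) k i)) := by
      rw [Matrix.mulVec_mulVec, Matrix.nonsing_inv_mul M hMd, Matrix.one_mulVec]
    rw [this, hcol, Matrix.mulVec_smul]
  refine ⟨goal1, ?_⟩
  -- invertibility of Xt * (T⁻¹)ᴴ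
  have hYunit : IsUnit Y := by
    rw [Matrix.isUnit_iff_isUnit_det, isUnit_iff_ne_zero]
    intro h
    obtain ⟨v, hv, hv0⟩ := Matrix.exists_mulVec_eq_zero_iff.mpr h
    exact hv (aux_ker hlaminj hdz heq v hv0)
  have hiTH : IsUnit ((T⁻¹)ᴴ) := by
    rw [Matrix.isUnit_iff_isUnit_det]
    refine IsUnit.of_mul_eq_one (Tᴴ).det ?_
    rw [← Matrix.det_mul, hHT, Matrix.det_one]
  have hXtunit : IsUnit Xt := by
    rw [hXtY]
    exact (hT.mul hYunit).mul ((Matrix.isUnit_iff_isUnit_det _).mpr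
      (IsUnit.of_mul_eq_one ((T⁻¹)ᴴ).det (by rw [← Matrix.det_mul, hTH, Matrix.det_one])))
  set N : Matrix (Fin r) (Fin r) ℂ := Xt * (T⁻¹)ᴴ with hNdef
  have hNunit : IsUnit N := hXtunit.mul hiTH
  have hNd : IsUnit N.det := (Matrix.isUnit_iff_isUnit_det N).mp hNunit
  have hNN : N * N⁻¹ = 1 := Matrix.mul_nonsing_inv N hNd
  rw [← hK]
  apply le_antisymm
  · rw [Submodule.span_le]
    rintro x ⟨i, rfl⟩
    refine ⟨(ζ i)⁻¹ • (fun l => N l i), ?_⟩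
    rw [Matrix.mulVecLin_apply, Matrix.mulVec_smul, ← aux_col_mul Q N i]
    rw [show Q * N = Q * Xt * (T⁻¹)ᴴ by rw [hNdef, Matrix.mul_assoc]]
    rw [goal1 i, smul_smul, inv_mul_cancel₀ (hζ i), one_smul]
  · rintro x ⟨y, rfl⟩
    rw [Matrix.mulVecLin_apply]
    have hy : Q *ᵥ y = (Q * Xt * (T⁻¹)ᴴ) *ᵥ (N⁻¹ *ᵥ y) := by
      rw [show Q * Xt * (T⁻¹)ᴴ = Q * N from by rw [hNdef, Matrix.mul_assoc],
        Matrix.mulVec_mulVec, Matrix.mul_assoc, hNN, Matrix.mul_one]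
    rw [hy, aux_mulVec_eq_sum]
    apply Submodule.sum_mem
    intro i _
    apply Submodule.smul_mem
    rw [goal1 i]
    exact Submodule.smul_mem _ _ (Submodule.subset_span ⟨i, rfl⟩)
end
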